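/- Let λ0, λ1 > 0, γ0 > 0 > γ1, y > 0 and t > y/γ0. Then for every natural number n ≥ 1, ∫_0^{ξ1(t,y)} λ1·e^{−λ1·τ} · λ0·λ1·(y − γ1·τ) · z(t−τ, y−γ1·τ)^{n−1}/((n−1)!·n!) · θ(t−τ, y−γ1·τ) dτ = (λ1/ξ0(t,y)) · z(t,y)^n/(n!)² · (y − (γ1/(n+1))·ξ1(t,y)) · θ(t,y). (This is the induction step of Theorem 2.1 showing that the explicit first-passage density f_0(·;2n) = λ0·λ1·y·z^{n−1}/((n−1)!·n!)·θ yields f_1(t,y;2n+1) = (λ1/ξ0)·z^n/(n!)²·(y − γ1·ξ1/(n+1))·θ via the coupled integral equation obtained by conditioning on the first velocity switch.) -/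

import Mathlib

/-! Along the characteristic `τ ↦ (t - τ, y - γ₁ τ)` the coordinate `ξ₀` is constant while `ξ₁`
decreases at unit speed, so `e^{-λ₁ τ} θ(t - τ, y - γ₁ τ) = θ(t, y)` and
`z(t - τ, y - γ₁ τ) = λ₀ λ₁ ξ₀ (ξ₁ - τ)`. The integrand is therefore `θ(t, y)` times the polynomial
`(y - γ₁ τ) (ξ₁ - τ)^{n-1}` in `τ`, whose integral over `[0, ξ₁]` is elementary. -/

open Real Filter MeasureTheory

/-- `ξ₀(t,x) = (x − γ₁ t)/(γ₀ − γ₁)`. -/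
noncomputable def xi0 (g0 g1 t x : ℝ) : ℝ := (x - g1 * t) / (g0 - g1)

/-- `ξ₁(t,x) = (γ₀ t − x)/(γ₀ − γ₁)`. -/
noncomputable def xi1 (g0 g1 t x : ℝ) : ℝ := (g0 * t - x) / (g0 - g1)

/-- `z(t,x) = λ₀ λ₁ ξ₀(t,x) ξ₁(t,x)`. -/
noncomputable def zf (l0 l1 g0 g1 t x : ℝ) : ℝ := l0 * l1 * xi0 g0 g1 t x * xi1 g0 g1 t x

/-- `θ(t,x) = exp(−λ₀ ξ₀(t,x) − λ₁ ξ₁(t,x))/(γ₀ − γ₁)`. -/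
noncomputable def thetaf (l0 l1 g0 g1 t x : ℝ) : ℝ :=
  Real.exp (-(l0 * xi0 g0 g1 t x) - l1 * xi1 g0 g1 t x) / (g0 - g1)

lemma integral_sub_pow (b : ℝ) (k : ℕ) :
    ∫ τ in (0 : ℝ)..b, (b - τ) ^ k = b ^ (k + 1) / (k + 1) := by
  rw [intervalIntegral.integral_comp_sub_left (fun x => x ^ k) b]
  simp [integral_pow]

lemma integral_affine_mul_sub_pow (y c b : ℝ) (m : ℕ) :
    ∫ τ in (0 : ℝ)..b, (y - c * τ) * (b - τ) ^ m
      = b ^ (m + 1) / (m + 1) * (y - c / (m + 2) * b) := by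
  have split : ∀ τ : ℝ,
      (y - c * τ) * (b - τ) ^ m = (y - c * b) * (b - τ) ^ m + c * (b - τ) ^ (m + 1) := by
    intro τ; ring
  simp_rw [split]
  rw [intervalIntegral.integral_add (by apply Continuous.intervalIntegrable; fun_prop)
      (by apply Continuous.intervalIntegrable; fun_prop),
    intervalIntegral.integral_const_mul, intervalIntegral.integral_const_mul,
    integral_sub_pow, integral_sub_pow]
  field_simp
  push_cast
  ring

section Characteristic

variable {l0 l1 g0 g1 : ℝ} (t x τ : ℝ)

lemma xi0_sub_sub_mul : xi0 g0 g1 (t - τ) (x - g1 * τ) = xi0 g0 g1 t x := by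
  unfold xi0; ring_nf

lemma xi1_sub_sub_mul (h : g0 ≠ g1) : xi1 g0 g1 (t - τ) (x - g1 * τ) = xi1 g0 g1 t x - τ := by
  unfold xi1; field_simp [sub_ne_zero.2 h]; ring

lemma exp_mul_thetaf_sub_sub_mul (h : g0 ≠ g1) :
    exp (-(l1 * τ)) * thetaf l0 l1 g0 g1 (t - τ) (x - g1 * τ) = thetaf l0 l1 g0 g1 t x := by
  unfold thetaf
  rw [xi0_sub_sub_mul, xi1_sub_sub_mul t x τ h, ← mul_div_assoc, ← exp_add]
  ring_nf

end Characteristic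

theorem fpt_induction_step_odd_general (l0 l1 g0 g1 t y : ℝ)
    (hg0 : 0 < g0) (hg1 : g1 < 0)
    (hy : 0 < y) (ht : y / g0 < t) (n : ℕ) (hn : 1 ≤ n) :
    ∫ τ in (0 : ℝ)..(xi1 g0 g1 t y),
        l1 * Real.exp (-(l1 * τ)) *
          (l0 * l1 * (y - g1 * τ) *
            (zf l0 l1 g0 g1 (t - τ) (y - g1 * τ)) ^ (n - 1)
            / ((Nat.factorial (n - 1) : ℝ) * (Nat.factorial n : ℝ))) *
          thetaf l0 l1 g0 g1 (t - τ) (y - g1 * τ)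
      = (l1 / xi0 g0 g1 t y) * (zf l0 l1 g0 g1 t y) ^ n / (Nat.factorial n : ℝ) ^ 2 *
          (y - (g1 / ((n : ℝ) + 1)) * xi1 g0 g1 t y) * thetaf l0 l1 g0 g1 t y := by
  obtain ⟨m, rfl⟩ : ∃ m, n = m + 1 := ⟨n - 1, by omega⟩
  have hg : g0 ≠ g1 := (hg1.trans hg0).ne'
  have hX : xi0 g0 g1 t y ≠ 0 := by
    have ht0 : 0 < t := (div_pos hy hg0).trans ht
    exact (div_pos (by nlinarith) (sub_pos.2 (hg1.trans hg0))).ne'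
  have integrand : ∀ τ : ℝ,
      l1 * exp (-(l1 * τ)) *
          (l0 * l1 * (y - g1 * τ) * zf l0 l1 g0 g1 (t - τ) (y - g1 * τ) ^ (m + 1 - 1)
            / ((m + 1 - 1).factorial * (m + 1).factorial)) *
          thetaf l0 l1 g0 g1 (t - τ) (y - g1 * τ)
        = l1 * (l0 * l1) ^ (m + 1) * xi0 g0 g1 t y ^ m * thetaf l0 l1 g0 g1 t y
            / (m.factorial * (m + 1).factorial)
          * ((y - g1 * τ) * (xi1 g0 g1 t y - τ) ^ m) := by
    intro τ
    rw [← exp_mul_thetaf_sub_sub_mul t y τ hg, Nat.add_sub_cancel, zf, xi0_sub_sub_mul,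
      xi1_sub_sub_mul t y τ hg, mul_pow, mul_pow, mul_pow]
    ring
  rw [intervalIntegral.integral_congr fun τ _ => integrand τ,
    intervalIntegral.integral_const_mul, integral_affine_mul_sub_pow, zf, Nat.factorial_succ]
  push_cast
  field_simp
  ring

/-- induction step of Theorem 2.1 — the first-passage density `f₀(·;2n)`
yields `f₁(t,y;2n+1)` via the coupled integral equation (conditioning on the first switch). -/
theorem fpt_induction_step_odd (l0 l1 g0 g1 t y : ℝ)
    (hl0 : 0 < l0) (hl1 : 0 < l1) (hg0 : 0 < g0) (hg1 : g1 < 0)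
    (hy : 0 < y) (ht : y / g0 < t) (n : ℕ) (hn : 1 ≤ n) :
    ∫ τ in (0 : ℝ)..(xi1 g0 g1 t y),
        l1 * Real.exp (-(l1 * τ)) *
          (l0 * l1 * (y - g1 * τ) *
            (zf l0 l1 g0 g1 (t - τ) (y - g1 * τ)) ^ (n - 1)
            / ((Nat.factorial (n - 1) : ℝ) * (Nat.factorial n : ℝ))) *
          thetaf l0 l1 g0 g1 (t - τ) (y - g1 * τ)
      = (l1 / xi0 g0 g1 t y) * (zf l0 l1 g0 g1 t y) ^ n / (Nat.factorial n : ℝ) ^ 2 *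
          (y - (g1 / ((n : ℝ) + 1)) * xi1 g0 g1 t y) * thetaf l0 l1 g0 g1 t y :=
  fpt_induction_step_odd_general l0 l1 g0 g1 t y hg0 hg1 hy ht n hn
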